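/- Let n ∈ ℕ, m ≥ 2, and fix a standard orthonormal basis {B_x} of the m^n-dimensional Hermitian matrices given by tensor products of a standard orthonormal basis of H_m. Let 1 > r ≥ c > 0 and for Hermitian Q = ∑_x Q̂(x)B_x define R = ∑_x r^{w₁(x)} c^{w₂(x)} Q̂(x) B_x, where w₁(x) counts coordinates with x_i ∈ {1,2} and w₂(x) counts coordinates with x_i ≥ 3. If Q̂(0ⁿ)² = O(ε), |tr(Q²)/mⁿ − 1| = O(ε), and |tr(R²)/mⁿ − r²| = O(ε), then the normalized Frobenius distance between R and rQ is O(√ε). -/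

import Mathlib

open Matrix

noncomputable def frobNorm {m k : Type*} [Fintype m] [Fintype k] (M : Matrix m k ℂ) : ℝ :=
  Real.sqrt (∑ i, ∑ j, Complex.normSq (M i j))

/-- Tensor-product element `B_x = ⊗ᵢ B_{xᵢ}` of an `n`-fold basis built from a basis `B`
of `m × m` Hermitian matrices. -/
noncomputable def tensorBasis {n m : ℕ} (B : Fin (m * m) → Matrix (Fin m) (Fin m) ℂ)
    (x : Fin n → Fin (m * m)) : Matrix (Fin n → Fin m) (Fin n → Fin m) ℂ :=
  fun y z => ∏ i, B (x i) (y i) (z i)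

/-- Number of coordinates of `x` equal to 1 or 2. -/
def w1 {n m : ℕ} (x : Fin n → Fin (m * m)) : ℕ :=
  (Finset.univ.filter fun i => (x i : ℕ) = 1 ∨ (x i : ℕ) = 2).card

/-- Number of coordinates of `x` that are at least 3. -/
def w2 {n m : ℕ} (x : Fin n → Fin (m * m)) : ℕ :=
  (Finset.univ.filter fun i => 3 ≤ (x i : ℕ)).card

/-!
Parseval's identity in the tensor basis turns everything into sums over the coefficients `Q̂(x)`;
`R − rQ` has coefficients `(f(x) − r) Q̂(x)` with `f(x) = r^{w₁(x)} c^{w₂(x)}`. Since `f(0ⁿ) = 1`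
and `0 ≤ f(x) ≤ r` for `x ≠ 0ⁿ`, we get `(f − r)² + f² ≤ r²` off `0ⁿ` (as `f (f − r) ≤ 0`).
Summing, `‖R − rQ‖² + ‖R‖² ≤ r² ‖Q‖² + 2 Q̂(0ⁿ)²` in normalized Frobenius norm, and the three
hypotheses bound the right side minus `‖R‖²` by `4ε`.
-/

lemma sum_sum_prod_eq_prod_sum_sum {ι κ R : Type*} [Fintype ι] [DecidableEq ι] [Fintype κ]
    [CommSemiring R] (g : ι → κ → κ → R) :
    ∑ y : ι → κ, ∑ z : ι → κ, ∏ i, g i (y i) (z i) = ∏ i, ∑ a, ∑ b, g i a b := by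
  simp only [Fintype.prod_sum]

lemma trace_conjTranspose_tensorBasis_mul_tensorBasis {n m : ℕ}
    (B : Fin (m * m) → Matrix (Fin m) (Fin m) ℂ) (x y : Fin n → Fin (m * m)) :
    ((tensorBasis B x)ᴴ * tensorBasis B y).trace = ∏ i, ((B (x i))ᴴ * B (y i)).trace := by
  simp only [Matrix.trace, Matrix.diag, Matrix.mul_apply, Matrix.conjTranspose_apply,
    tensorBasis, star_prod, ← Finset.prod_mul_distrib]
  exact sum_sum_prod_eq_prod_sum_sum fun i a b => star (B (x i) b a) * B (y i) b a

lemma trace_conjTranspose_tensorBasis_mul_tensorBasis_of_orthonormal {n m : ℕ}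
    {B : Fin (m * m) → Matrix (Fin m) (Fin m) ℂ}
    (hB : ∀ i j, ((B i)ᴴ * B j).trace / m = if i = j then 1 else 0) (x y : Fin n → Fin (m * m)) :
    ((tensorBasis B x)ᴴ * tensorBasis B y).trace = if x = y then (m : ℂ) ^ n else 0 := by
  have hB' : ∀ i j, ((B i)ᴴ * B j).trace = if i = j then (m : ℂ) else 0 := fun i j => by
    have hm : (m : ℂ) ≠ 0 := Nat.cast_ne_zero.mpr (by rintro rfl; exact i.elim0)
    rw [(div_eq_iff hm).mp (hB i j)]
    split_ifs <;> simp
  rw [trace_conjTranspose_tensorBasis_mul_tensorBasis]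
  simp only [hB']
  split_ifs with hxy
  · simp [hxy]
  · obtain ⟨i, hi⟩ := Function.ne_iff.mp hxy
    exact Finset.prod_eq_zero (Finset.mem_univ i) (if_neg hi)

lemma isHermitian_tensorBasis {n m : ℕ} {B : Fin (m * m) → Matrix (Fin m) (Fin m) ℂ}
    (hB : ∀ i, (B i).IsHermitian) (x : Fin n → Fin (m * m)) : (tensorBasis B x).IsHermitian := by
  ext y z
  simp only [Matrix.conjTranspose_apply, tensorBasis, star_prod]
  exact Finset.prod_congr rfl fun i _ => (hB (x i)).apply (y i) (z i)

lemma isHermitian_sum_smul_tensorBasis {n m : ℕ} {B : Fin (m * m) → Matrix (Fin m) (Fin m) ℂ}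
    (hB : ∀ i, (B i).IsHermitian) (d : (Fin n → Fin (m * m)) → ℝ) :
    (∑ x, (d x : ℂ) • tensorBasis B x).IsHermitian :=
  isSelfAdjoint_sum _ fun x _ => (isHermitian_tensorBasis hB x).smul (Complex.conj_ofReal (d x))

lemma trace_conjTranspose_mul_self_sum_smul_tensorBasis {n m : ℕ}
    {B : Fin (m * m) → Matrix (Fin m) (Fin m) ℂ}
    (hB : ∀ i j, ((B i)ᴴ * B j).trace / m = if i = j then 1 else 0)
    (d : (Fin n → Fin (m * m)) → ℝ) :
    ((∑ x, (d x : ℂ) • tensorBasis B x)ᴴ * ∑ x, (d x : ℂ) • tensorBasis B x).trace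
      = (((m : ℝ) ^ n * ∑ x, d x ^ 2 : ℝ) : ℂ) := by
  simp only [Matrix.conjTranspose_sum, Matrix.conjTranspose_smul, Finset.sum_mul,
    Finset.mul_sum, Matrix.smul_mul, Matrix.mul_smul, Matrix.trace_sum, Matrix.trace_smul,
    trace_conjTranspose_tensorBasis_mul_tensorBasis_of_orthonormal hB, smul_eq_mul, mul_ite,
    mul_zero, Finset.sum_ite_eq', Finset.mem_univ, if_true, Complex.star_def, Complex.conj_ofReal]
  push_cast
  exact Finset.sum_congr rfl fun x _ => by ring

lemma frobNorm_eq_sqrt_re_trace {m k : Type*} [Fintype m] [Fintype k] (M : Matrix m k ℂ) :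
    frobNorm M = √(Mᴴ * M).trace.re := by
  simp only [frobNorm, Matrix.trace, Matrix.diag, Matrix.mul_apply, Matrix.conjTranspose_apply,
    Complex.re_sum, Complex.star_def, ← Complex.normSq_eq_conj_mul_self, Complex.ofReal_re]
  rw [Finset.sum_comm]

lemma frobNorm_sum_smul_tensorBasis {n m : ℕ} {B : Fin (m * m) → Matrix (Fin m) (Fin m) ℂ}
    (hB : ∀ i j, ((B i)ᴴ * B j).trace / m = if i = j then 1 else 0)
    (d : (Fin n → Fin (m * m)) → ℝ) :
    frobNorm (∑ x, (d x : ℂ) • tensorBasis B x) = √((m : ℝ) ^ n) * √(∑ x, d x ^ 2) := by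
  rw [frobNorm_eq_sqrt_re_trace, trace_conjTranspose_mul_self_sum_smul_tensorBasis hB,
    Complex.ofReal_re, Real.sqrt_mul (by positivity)]

lemma re_trace_mul_self_sum_smul_tensorBasis {n m : ℕ}
    {B : Fin (m * m) → Matrix (Fin m) (Fin m) ℂ} (hBh : ∀ i, (B i).IsHermitian)
    (hB : ∀ i j, ((B i)ᴴ * B j).trace / m = if i = j then 1 else 0)
    (d : (Fin n → Fin (m * m)) → ℝ) :
    ((∑ x, (d x : ℂ) • tensorBasis B x) * ∑ x, (d x : ℂ) • tensorBasis B x).trace.re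
      = (m : ℝ) ^ n * ∑ x, d x ^ 2 := by
  conv_lhs => enter [1, 1, 1]; rw [← (isHermitian_sum_smul_tensorBasis hBh d).eq]
  rw [trace_conjTranspose_mul_self_sum_smul_tensorBasis hB, Complex.ofReal_re]

lemma w1_add_w2_eq_zero_iff {n m : ℕ} (x : Fin n → Fin (m * m)) :
    w1 x + w2 x = 0 ↔ ∀ i, (x i : ℕ) = 0 := by
  simp only [w1, w2, Nat.add_eq_zero_iff, Finset.card_eq_zero, Finset.filter_eq_empty_iff,
    Finset.mem_univ, true_implies, ← forall_and]
  exact forall_congr' fun i => by omega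

lemma pow_w1_mul_pow_w2_le {n m : ℕ} {r c : ℝ} (hc : 0 ≤ c) (hcr : c ≤ r) (hr : r ≤ 1)
    {x : Fin n → Fin (m * m)} (hx : w1 x + w2 x ≠ 0) : r ^ w1 x * c ^ w2 x ≤ r :=
  calc r ^ w1 x * c ^ w2 x ≤ r ^ w1 x * r ^ w2 x :=
        mul_le_mul_of_nonneg_left (pow_le_pow_left₀ hc hcr _) (pow_nonneg (hc.trans hcr) _)
    _ = r ^ (w1 x + w2 x) := (pow_add r _ _).symm
    _ ≤ r := pow_le_of_le_one (hc.trans hcr) hr hx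

lemma sq_sub_mul_add_sq_mul_le {f r : ℝ} (hf : 0 ≤ f) (hfr : f ≤ r) (a : ℝ) :
    ((f - r) * a) ^ 2 + (f * a) ^ 2 ≤ r ^ 2 * a ^ 2 := by
  nlinarith [mul_nonneg (mul_nonneg hf (sub_nonneg.mpr hfr)) (sq_nonneg a)]

lemma sum_sq_sub_mul_add_sum_sq_mul_le {ι : Type*} [Fintype ι] {f a : ι → ℝ} {r : ℝ} {x₀ : ι}
    (hr : 0 ≤ r) (hf₀ : f x₀ = 1) (hf : ∀ x ≠ x₀, 0 ≤ f x ∧ f x ≤ r) :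
    ∑ x, ((f x - r) * a x) ^ 2 + ∑ x, (f x * a x) ^ 2 ≤ r ^ 2 * ∑ x, a x ^ 2 + 2 * a x₀ ^ 2 := by
  classical
  rw [← Finset.sum_add_distrib, Finset.mul_sum, ← Finset.add_sum_erase _ _ (Finset.mem_univ x₀),
    ← Finset.add_sum_erase _ _ (Finset.mem_univ x₀), hf₀]
  have hrest : ∀ x ∈ Finset.univ.erase x₀,
      ((f x - r) * a x) ^ 2 + (f x * a x) ^ 2 ≤ r ^ 2 * a x ^ 2 := fun x hx =>
    sq_sub_mul_add_sq_mul_le (hf x (Finset.ne_of_mem_erase hx)).1 (hf x (Finset.ne_of_mem_erase hx)).2 _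
  nlinarith [Finset.sum_le_sum hrest, sq_nonneg (a x₀)]

lemma sum_sq_sub_mul_le {ι : Type*} [Fintype ι] {f a : ι → ℝ} {r ε : ℝ} {x₀ : ι}
    (hr₀ : 0 ≤ r) (hr₁ : r ≤ 1) (hε : 0 ≤ ε) (hf₀ : f x₀ = 1) (hf : ∀ x ≠ x₀, 0 ≤ f x ∧ f x ≤ r)
    (ha₀ : a x₀ ^ 2 ≤ ε) (ha : |∑ x, a x ^ 2 - 1| ≤ ε) (hfa : |∑ x, (f x * a x) ^ 2 - r ^ 2| ≤ ε) :
    ∑ x, ((f x - r) * a x) ^ 2 ≤ 4 * ε := by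
  have key := sum_sq_sub_mul_add_sum_sq_mul_le (a := a) hr₀ hf₀ hf
  have hr2 : r ^ 2 * ε ≤ ε := mul_le_of_le_one_left hε (pow_le_one₀ hr₀ hr₁)
  nlinarith [(abs_le.mp ha).2, (abs_le.mp hfa).1]

theorem stmt17 (r c : ℝ) (hc : 0 < c) (hcr : c ≤ r) (hr : r < 1) :
    ∃ Cst : ℝ, 0 < Cst ∧
      ∀ (n m : ℕ) (hm : 2 ≤ m) (ε : ℝ) (_ : 0 ≤ ε)
        (B : Fin (m * m) → Matrix (Fin m) (Fin m) ℂ)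
        (Qc : (Fin n → Fin (m * m)) → ℝ)
        (Q R : Matrix (Fin n → Fin m) (Fin n → Fin m) ℂ),
        (∀ i, (B i).IsHermitian) →
        B ⟨0, by nlinarith⟩ = 1 →
        (∀ i j, ((B i)ᴴ * B j).trace / m = if i = j then 1 else 0) →
        Q = ∑ x, (Qc x : ℂ) • tensorBasis B x →
        R = ∑ x, ((r ^ w1 x * c ^ w2 x * Qc x : ℝ) : ℂ) • tensorBasis B x →
        (Qc fun _ => ⟨0, by nlinarith⟩) ^ 2 ≤ ε →
        |((Q * Q).trace).re / (m : ℝ) ^ n - 1| ≤ ε →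
        |((R * R).trace).re / (m : ℝ) ^ n - r ^ 2| ≤ ε →
        frobNorm (R - (r : ℂ) • Q) / Real.sqrt ((m : ℝ) ^ n) ≤ Cst * Real.sqrt ε := by
  refine ⟨2, two_pos, fun n m hm ε hε B Qc Q R hBh _ hB hQ hR hQ₀ hQQ hRR => ?_⟩
  set x₀ : Fin n → Fin (m * m) := fun _ => ⟨0, by nlinarith⟩
  set f : (Fin n → Fin (m * m)) → ℝ := fun x => r ^ w1 x * c ^ w2 x
  have hr₀ : 0 ≤ r := hc.le.trans hcr
  have hmn : (0 : ℝ) < (m : ℝ) ^ n := by positivity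
  have hf₀ : f x₀ = 1 := by
    have := (w1_add_w2_eq_zero_iff x₀).mpr fun _ => rfl
    simp [f, show w1 x₀ = 0 by omega, show w2 x₀ = 0 by omega]
  have hf : ∀ x ≠ x₀, 0 ≤ f x ∧ f x ≤ r := fun x hx =>
    ⟨mul_nonneg (pow_nonneg hr₀ _) (pow_nonneg hc.le _), pow_w1_mul_pow_w2_le hc.le hcr hr.le fun h =>
      hx (funext fun i => Fin.ext ((w1_add_w2_eq_zero_iff x).mp h i))⟩
  have hRQ : R - (r : ℂ) • Q = ∑ x, (((f x - r) * Qc x : ℝ) : ℂ) • tensorBasis B x := by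
    simp only [hQ, hR, Finset.smul_sum, smul_smul, ← Finset.sum_sub_distrib, ← sub_smul, f]
    push_cast
    ring_nf
  rw [hQ, re_trace_mul_self_sum_smul_tensorBasis hBh hB, mul_div_cancel_left₀ _ hmn.ne'] at hQQ
  rw [hR, re_trace_mul_self_sum_smul_tensorBasis hBh hB, mul_div_cancel_left₀ _ hmn.ne'] at hRR
  rw [hRQ, frobNorm_sum_smul_tensorBasis hB, mul_div_cancel_left₀ _ (Real.sqrt_pos.mpr hmn).ne']
  calc √(∑ x, ((f x - r) * Qc x) ^ 2)
      ≤ √(4 * ε) := Real.sqrt_le_sqrt <|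
        sum_sq_sub_mul_le hr₀ hr.le hε hf₀ hf hQ₀ hQQ hRR
    _ = 2 * √ε := by rw [Real.sqrt_mul' _ hε, show (4 : ℝ) = 2 ^ 2 by norm_num,
        Real.sqrt_sq zero_le_two]
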